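/- arXiv:2507.09261 — 2 statements merged into one kernel-verified Lean document; each statement's English description precedes it below -/
import Mathlib

section
/- Let H be a finite-dimensional Hilbert space with an orthogonal decomposition given by projections {P_m}_{m=0}^{M-1} satisfying P_m P_{m'} = δ_{mm'} P_m and Σ_m P_m = I. For any density operator ρ on H, 1 - Σ_m Tr[(P_m √ρ P_m)^2] = min over σ in I of (1 - [Tr(√ρ √σ)]^2), where I = {σ density operator : σ = Σ_m P_m σ P_m} is the set of block-diagonal (incoherent) states. -/
open scoped ComplexOrder

open Classical in
/-- The positive semidefinite square root of a matrix (zero if not psd). -/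
noncomputable def msqrt {d : ℕ} (ρ : Matrix (Fin d) (Fin d) ℂ) : Matrix (Fin d) (Fin d) ℂ :=
  if h : ρ.PosSemidef then
    (h.1.eigenvectorUnitary : Matrix (Fin d) (Fin d) ℂ) *
      Matrix.diagonal ((↑) ∘ (√·) ∘ h.1.eigenvalues) *
      (star h.1.eigenvectorUnitary : Matrix (Fin d) (Fin d) ℂ)
  else 0

/-!
Write `A = √ρ` and `Δ Y = Σ_m P_m Y P_m` for the pinching. `Δ` is self-adjoint for the trace
pairing, and a block-diagonal `σ` commutes with every `P_m`, hence so does `√σ`, i.e. `Δ √σ = √σ`.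
Therefore `Tr(A √σ) = Tr(Δ(A) √σ)`, which by Cauchy–Schwarz for the Hilbert–Schmidt inner product
is at most `‖Δ(A)‖₂ ‖√σ‖₂ = ‖Δ(A)‖₂`, and `‖Δ(A)‖₂² = Σ_m Tr[(P_m A P_m)²]` by orthogonality.
Equality holds at `σ = Δ(A)² / Tr Δ(A)²`, whose square root is `Δ(A) / ‖Δ(A)‖₂` because
`Δ(A) ≥ 0`; here `Δ(A) ≠ 0` since `Tr Δ(A) = Tr A` and `A ≠ 0`.
-/

open scoped MatrixOrder

open RCLike

namespace Matrix
variable {n ι 𝕜 : Type*} [Fintype n] [Fintype ι] [RCLike 𝕜]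

/-- Block-diagonality of `σ` with respect to `P` is expressed as `pinching P σ = σ`. -/
def pinching (P : ι → Matrix n n 𝕜) (Y : Matrix n n 𝕜) : Matrix n n 𝕜 :=
  ∑ m, P m * Y * P m

section pinching

variable {P : ι → Matrix n n 𝕜}

lemma trace_mul_pinching (Y Z : Matrix n n 𝕜) :
    (Y * pinching P Z).trace = (pinching P Y * Z).trace := by
  simp only [pinching, Finset.mul_sum, Finset.sum_mul, trace_sum]
  refine Finset.sum_congr rfl fun m _ => ?_
  rw [← mul_assoc, trace_mul_comm, ← mul_assoc, ← mul_assoc]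

lemma PosSemidef.pinching (hP : ∀ m, (P m).IsHermitian) {Y : Matrix n n 𝕜} (hY : Y.PosSemidef) :
    (pinching P Y).PosSemidef :=
  posSemidef_sum _ fun m _ => by simpa [(hP m).eq] using hY.conjTranspose_mul_mul_same (P m)

variable (hPi : ∀ m, P m * P m = P m)
include hPi

lemma trace_pinching [DecidableEq n] (hPs : ∑ m, P m = 1) (Y : Matrix n n 𝕜) :
    (pinching P Y).trace = Y.trace := by
  simp only [pinching, trace_sum, trace_mul_comm _ (P _), ← mul_assoc, hPi]
  rw [← trace_sum, ← Finset.sum_mul, hPs, one_mul]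

lemma pinching_eq_self_of_commute [DecidableEq n] (hPs : ∑ m, P m = 1) {Y : Matrix n n 𝕜}
    (hY : ∀ m, Commute (P m) Y) : pinching P Y = Y := by
  simp only [pinching, (hY _).eq, mul_assoc, hPi]
  rw [← Finset.mul_sum, hPs, mul_one]

variable (hPo : ∀ m m', m ≠ m' → P m * P m' = 0)
include hPo

lemma mul_pinching (Y : Matrix n n 𝕜) (k : ι) : P k * pinching P Y = P k * Y * P k := by
  rw [pinching, Finset.mul_sum, Finset.sum_eq_single k]
  · rw [← mul_assoc, ← mul_assoc, hPi]
  · intro m _ hm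
    rw [← mul_assoc, ← mul_assoc, hPo k m (Ne.symm hm), zero_mul, zero_mul]
  · simp

lemma pinching_mul (Y : Matrix n n 𝕜) (k : ι) : pinching P Y * P k = P k * Y * P k := by
  rw [pinching, Finset.sum_mul, Finset.sum_eq_single k]
  · rw [mul_assoc, hPi]
  · intro m _ hm
    rw [mul_assoc, hPo m k hm, mul_zero]
  · simp

lemma commute_pinching (Y : Matrix n n 𝕜) (k : ι) : Commute (P k) (pinching P Y) :=
  (mul_pinching hPi hPo Y k).trans (pinching_mul hPi hPo Y k).symm

lemma pinching_mul_pinching (Y Z : Matrix n n 𝕜) :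
    pinching P Y * pinching P Z = ∑ m, (P m * Y * P m) * (P m * Z * P m) := by
  rw [pinching, Finset.sum_mul]
  refine Finset.sum_congr rfl fun m _ => ?_
  simp only [mul_assoc, mul_pinching hPi hPo]
  rw [← mul_assoc (P m) (P m), hPi]

lemma trace_mul_pinching_self [DecidableEq n] (hPs : ∑ m, P m = 1) (Y : Matrix n n 𝕜) :
    (Y * pinching P Y).trace = (pinching P Y * pinching P Y).trace := by
  rw [← trace_mul_pinching, pinching_eq_self_of_commute hPi hPs (commute_pinching hPi hPo Y)]

end pinching

lemma sq_re_trace_mul_le [DecidableEq n] {X Y : Matrix n n 𝕜} (hX : X.IsHermitian)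
    (hY : Y.IsHermitian) :
    re (X * Y).trace ^ 2 ≤ re (X * X).trace * re (Y * Y).trace := by
  let _ := toMatrixSeminormedAddCommGroup (1 : Matrix n n 𝕜) PosSemidef.one
  let _ := toMatrixInnerProductSpace (1 : Matrix n n 𝕜) PosSemidef.one
  have inner_eq : ∀ {A : Matrix n n 𝕜}, A.IsHermitian → ∀ B, inner 𝕜 A B = (A * B).trace :=
    fun {A} hA B => by
      change (B * 1 * Aᴴ).trace = _
      rw [mul_one, hA.eq, trace_mul_comm]
  rw [← inner_eq hX, ← inner_eq hX, ← inner_eq hY, inner_self_eq_norm_sq, inner_self_eq_norm_sq,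
    ← mul_pow, ← sq_abs]
  exact pow_le_pow_left₀ (abs_nonneg _) ((abs_re_le_norm _).trans (norm_inner_le_norm X Y)) 2

variable [DecidableEq n] {P : ι → Matrix n n 𝕜} (hPh : ∀ m, (P m).IsHermitian)
  (hPi : ∀ m, P m * P m = P m) (hPo : ∀ m m', m ≠ m' → P m * P m' = 0) (hPs : ∑ m, P m = 1)
include hPi hPo hPs

omit hPh in
lemma pinching_sqrt_of_pinching_eq_self {σ : Matrix n n 𝕜} (hσ : pinching P σ = σ) :
    pinching P (CFC.sqrt σ) = CFC.sqrt σ :=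
  pinching_eq_self_of_commute hPi hPs fun m =>
    ((hσ ▸ commute_pinching hPi hPo σ m).symm.cfcₙ_nnreal _).symm

include hPh

lemma sq_re_trace_sqrt_mul_sqrt_le (ρ : Matrix n n 𝕜) {σ : Matrix n n 𝕜} (hσ : σ.PosSemidef)
    (hσtr : σ.trace = 1) (hσP : pinching P σ = σ) :
    re (CFC.sqrt ρ * CFC.sqrt σ).trace ^ 2 ≤
      re (pinching P (CFC.sqrt ρ) * pinching P (CFC.sqrt ρ)).trace := by
  have hX := ((LE.le.posSemidef (CFC.sqrt_nonneg ρ)).pinching hPh).isHermitian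
  have hB := (LE.le.posSemidef (CFC.sqrt_nonneg σ)).isHermitian
  calc re (CFC.sqrt ρ * CFC.sqrt σ).trace ^ 2
      = re (pinching P (CFC.sqrt ρ) * CFC.sqrt σ).trace ^ 2 := by
        rw [← trace_mul_pinching, pinching_sqrt_of_pinching_eq_self hPi hPo hPs hσP]
    _ ≤ re (pinching P (CFC.sqrt ρ) * pinching P (CFC.sqrt ρ)).trace *
          re (CFC.sqrt σ * CFC.sqrt σ).trace := sq_re_trace_mul_le hX hB
    _ = re (pinching P (CFC.sqrt ρ) * pinching P (CFC.sqrt ρ)).trace := by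
        rw [CFC.sqrt_mul_sqrt_self σ hσ.nonneg, hσtr, one_re, mul_one]

omit hPo in
lemma trace_pinching_sqrt_mul_self_pos {ρ : Matrix n n 𝕜} (hρ : ρ.PosSemidef) (hρ0 : ρ ≠ 0) :
    0 < (pinching P (CFC.sqrt ρ) * pinching P (CFC.sqrt ρ)).trace := by
  have hA := LE.le.posSemidef (CFC.sqrt_nonneg ρ)
  have hX := hA.pinching hPh
  have hX0 : pinching P (CFC.sqrt ρ) ≠ 0 := fun h =>
    hρ0 <| (CFC.sqrt_eq_zero_iff ρ hρ.nonneg).mp <|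
      hA.trace_eq_zero_iff.mp (by rw [← trace_pinching hPi hPs, h, trace_zero])
  have hXX := posSemidef_conjTranspose_mul_self (pinching P (CFC.sqrt ρ))
  have hXX0 := trace_conjTranspose_mul_self_eq_zero_iff.not.mpr hX0
  rw [hX.isHermitian.eq] at hXX hXX0
  exact hXX.trace_nonneg.lt_of_ne' hXX0

lemma exists_sq_re_trace_sqrt_mul_sqrt_eq {ρ : Matrix n n 𝕜} (hρ : ρ.PosSemidef) (hρ0 : ρ ≠ 0) :
    ∃ σ : Matrix n n 𝕜, σ.PosSemidef ∧ σ.trace = 1 ∧ pinching P σ = σ ∧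
      re (CFC.sqrt ρ * CFC.sqrt σ).trace ^ 2 =
        re (pinching P (CFC.sqrt ρ) * pinching P (CFC.sqrt ρ)).trace := by
  set X := pinching P (CFC.sqrt ρ)
  obtain ⟨N, hN, hNX⟩ := pos_iff_exists_ofReal.mp
    (trace_pinching_sqrt_mul_self_pos hPh hPi hPs hρ hρ0)
  set B := (√N)⁻¹ • X
  have hB : B.PosSemidef :=
    ((LE.le.posSemidef (CFC.sqrt_nonneg ρ)).pinching hPh).smul (by positivity)
  have hBB : B * B = N⁻¹ • (X * X) := by
    rw [smul_mul_smul_comm, ← mul_inv, Real.mul_self_sqrt hN.le]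
  refine ⟨B * B, ?_, ?_, ?_, ?_⟩
  · simpa [hB.1.eq] using posSemidef_conjTranspose_mul_self B
  · rw [hBB, trace_smul, ← hNX, real_smul_eq_coe_mul, ← ofReal_mul, inv_mul_cancel₀ hN.ne',
      ofReal_one]
  · have hXP := commute_pinching hPi hPo (CFC.sqrt ρ)
    exact pinching_eq_self_of_commute hPi hPs fun m =>
      ((hXP m).smul_right _).mul_right ((hXP m).smul_right _)
  · rw [CFC.sqrt_mul_self B hB.nonneg, mul_smul_comm, trace_smul,
      trace_mul_pinching_self hPi hPo hPs, ← hNX, smul_re, ofReal_re, mul_pow, inv_pow,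
      Real.sq_sqrt hN.le]
    field_simp

end Matrix

lemma msqrt_eq_cfcSqrt {d : ℕ} {ρ : Matrix (Fin d) (Fin d) ℂ} (hρ : ρ.PosSemidef) :
    msqrt ρ = CFC.sqrt ρ := by
  rw [CFC.sqrt_eq_real_sqrt ρ hρ.nonneg, cfcₙ_eq_cfc, hρ.1.cfc_eq, msqrt, dif_pos hρ]
  simp only [Matrix.IsHermitian.cfc, Unitary.conjStarAlgAut_apply]
  rfl

/-- The generalized 1/2-affinity of coherence `C(ρ) = 1 - Σ_m Tr[(P_m √ρ P_m)²]`
equals the minimal 1/2-affinity distance `1 - [Tr(√ρ√σ)]²` to the set of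
block-diagonal states `σ = Σ_m P_m σ P_m`. -/
theorem affinity_coherence_eq_min_dist {d M : ℕ}
    (P : Fin M → Matrix (Fin d) (Fin d) ℂ)
    (hPh : ∀ m, (P m).IsHermitian) (hPi : ∀ m, P m * P m = P m)
    (hPo : ∀ m m', m ≠ m' → P m * P m' = 0) (hPs : ∑ m, P m = 1)
    (ρ : Matrix (Fin d) (Fin d) ℂ) (hρ : ρ.PosSemidef) (hρtr : ρ.trace = 1) :
    IsLeast {x : ℝ | ∃ σ : Matrix (Fin d) (Fin d) ℂ, σ.PosSemidef ∧ σ.trace = 1 ∧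
        σ = ∑ m, P m * σ * P m ∧ x = 1 - ((msqrt ρ * msqrt σ).trace.re) ^ 2}
      (1 - ∑ m, ((P m * msqrt ρ * P m) ^ 2).trace.re) := by
  have hvalue : ∑ m, ((P m * msqrt ρ * P m) ^ 2).trace.re =
      re (Matrix.pinching P (CFC.sqrt ρ) * Matrix.pinching P (CFC.sqrt ρ)).trace := by
    simp only [msqrt_eq_cfcSqrt hρ, Matrix.pinching_mul_pinching hPi hPo, Matrix.trace_sum,
      map_sum, sq, re_to_complex]
  rw [hvalue]
  constructor
  · obtain ⟨σ, hσ, hσtr, hσP, hσvalue⟩ := Matrix.exists_sq_re_trace_sqrt_mul_sqrt_eq hPh hPi hPo hPs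
      hρ (by rintro rfl; simp at hρtr)
    refine ⟨σ, hσ, hσtr, hσP.symm, ?_⟩
    rw [msqrt_eq_cfcSqrt hρ, msqrt_eq_cfcSqrt hσ, ← re_to_complex, hσvalue]
  · rintro x ⟨σ, hσ, hσtr, hσP, rfl⟩
    have hle := Matrix.sq_re_trace_sqrt_mul_sqrt_le hPh hPi hPo hPs ρ hσ hσtr hσP.symm
    rw [msqrt_eq_cfcSqrt hρ, msqrt_eq_cfcSqrt hσ, ← re_to_complex]
    linarith
end

section
/- Let P and Q be orthogonal projections with PQ = 0, let X be a positive semidefinite operator, and set R = P + Q. Then Tr[(R X R)^2] ≥ Tr[(P X P)^2] + Tr[(Q X Q)^2]. -/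
open scoped ComplexOrder
open Matrix

/-- If `P, Q` are orthogonal projections with `PQ = 0`, `X ⪰ 0` and `R = P + Q`, then
`Tr[(RXR)²] ≥ Tr[(PXP)²] + Tr[(QXQ)²]`. -/
theorem trace_sq_coarse_grain {d : ℕ} (P Q X : Matrix (Fin d) (Fin d) ℂ)
    (hPh : P.IsHermitian) (hPi : P * P = P)
    (hQh : Q.IsHermitian) (hQi : Q * Q = Q)
    (hPQ : P * Q = 0) (hQP : Q * P = 0)
    (hX : X.PosSemidef) :
    ((P * X * P) ^ 2).trace.re + ((Q * X * Q) ^ 2).trace.re ≤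
      (((P + Q) * X * (P + Q)) ^ 2).trace.re := by
  have hXh : Xᴴ = X := hX.1
  have hP' : Pᴴ = P := hPh
  have hQ' : Qᴴ = Q := hQh
  have hPi' : ∀ A : Matrix (Fin d) (Fin d) ℂ, P * (P * A) = P * A := by
    intro A; rw [← Matrix.mul_assoc, hPi]
  have hQi' : ∀ A : Matrix (Fin d) (Fin d) ℂ, Q * (Q * A) = Q * A := by
    intro A; rw [← Matrix.mul_assoc, hQi]
  have hPQ' : ∀ A : Matrix (Fin d) (Fin d) ℂ, P * (Q * A) = 0 := by
    intro A; rw [← Matrix.mul_assoc, hPQ, Matrix.zero_mul]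
  have hQP' : ∀ A : Matrix (Fin d) (Fin d) ℂ, Q * (P * A) = 0 := by
    intro A; rw [← Matrix.mul_assoc, hQP, Matrix.zero_mul]
  have key : (((P + Q) * X * (P + Q)) ^ 2) =
      (P * X * P) ^ 2 + (Q * X * Q) ^ 2
      + ((Q * X * P)ᴴ * (Q * X * P) + (P * X * Q)ᴴ * (P * X * Q))
      + (P * X * (P * (X * Q)) + P * X * (Q * (X * Q))
        + Q * X * (P * (X * P)) + Q * X * (Q * (X * P))) := by
    simp only [Matrix.conjTranspose_mul, hP', hQ', hXh]
    simp only [pow_two, add_mul, mul_add, Matrix.mul_assoc, hPi', hQi', hPQ', hQP',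
      Matrix.mul_zero, Matrix.zero_mul, add_zero, zero_add]
    abel
  have e1 : (P * X * (P * (X * Q))).trace = 0 := by
    rw [Matrix.trace_mul_comm]
    simp [Matrix.mul_assoc, hQP']
  have e2 : (P * X * (Q * (X * Q))).trace = 0 := by
    rw [Matrix.trace_mul_comm]
    simp [Matrix.mul_assoc, hQP']
  have e3 : (Q * X * (P * (X * P))).trace = 0 := by
    rw [Matrix.trace_mul_comm]
    simp [Matrix.mul_assoc, hPQ']
  have e4 : (Q * X * (Q * (X * P))).trace = 0 := by
    rw [Matrix.trace_mul_comm]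
    simp [Matrix.mul_assoc, hPQ']
  have htr : ∀ M : Matrix (Fin d) (Fin d) ℂ, (0:ℝ) ≤ (Mᴴ * M).trace.re := by
    intro M
    simp only [Matrix.trace, Matrix.diag_apply, Matrix.mul_apply,
      Matrix.conjTranspose_apply, Complex.re_sum]
    refine Finset.sum_nonneg fun i _ => Finset.sum_nonneg fun j _ => ?_
    have : star (M j i) * M j i = (Complex.normSq (M j i) : ℂ) := by
      rw [mul_comm]; exact Complex.mul_conj _
    rw [this]
    simpa using Complex.normSq_nonneg (M j i)
  have hc' : (0:ℝ) ≤ ((Q * X * P)ᴴ * (Q * X * P)).trace.re := htr _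
  have hd' : (0:ℝ) ≤ ((P * X * Q)ᴴ * (P * X * Q)).trace.re := htr _
  rw [key]
  simp only [Matrix.trace_add, e1, e2, e3, e4, add_zero, zero_add, Complex.add_re]
  linarith
end
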